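/- Let A and B be Frobenius algebras, P a coalgebra with a measuring of Frobenius algebras ψ : P ⊗ A → B. Define ψ̄ : P^{cop} ⊗ B → A by ψ̄(p ⊗ b) := e¹ ν_B(ψ(p ⊗ e²) b), where e¹ ⊗ e² = Δ_A(1_A). Then ψ̄ is a measuring of Frobenius algebras from B to A (with respect to the co-opposite coalgebra structure on P). -/

import Mathlib

open TensorProduct

/-- A Frobenius algebra over `k`: a unital associative `k`-algebra `A` together with a
counital coassociative comultiplication satisfying the Frobenius conditions
`Δ(ab) = a^{(1)} ⊗ a^{(2)}b = ab^{(1)} ⊗ b^{(2)}`. -/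
structure FrobeniusAlgebra (k A : Type*) [CommRing k] [Ring A] [Algebra k A] where
  comul : A →ₗ[k] A ⊗[k] A
  counit : A →ₗ[k] k
  coassoc : ∀ a : A,
    TensorProduct.assoc k A A A
        (TensorProduct.map comul (LinearMap.id : A →ₗ[k] A) (comul a))
      = TensorProduct.map (LinearMap.id : A →ₗ[k] A) comul (comul a)
  counit_left : ∀ a : A,
    TensorProduct.lid k A
        (TensorProduct.map counit (LinearMap.id : A →ₗ[k] A) (comul a)) = a
  counit_right : ∀ a : A,
    TensorProduct.rid k A
        (TensorProduct.map (LinearMap.id : A →ₗ[k] A) counit (comul a)) = a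
  frob_left : ∀ a b : A,
    comul (a * b)
      = TensorProduct.map (LinearMap.mulLeft k a) (LinearMap.id : A →ₗ[k] A) (comul b)
  frob_right : ∀ a b : A,
    comul (a * b)
      = TensorProduct.map (LinearMap.id : A →ₗ[k] A) (LinearMap.mulRight k b) (comul a)

/-- A morphism of Frobenius algebras: a linear map which is simultaneously a morphism of
unital algebras and of counital coalgebras. -/
def IsFrobHom {k A B : Type*} [CommRing k] [Ring A] [Algebra k A] [Ring B] [Algebra k B]
    (FA : FrobeniusAlgebra k A) (FB : FrobeniusAlgebra k B) (h : A →ₗ[k] B) : Prop :=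
  (∀ a a' : A, h (a * a') = h a * h a') ∧ h 1 = 1 ∧
  (∀ a : A, FB.comul (h a) = TensorProduct.map h h (FA.comul a)) ∧
  (∀ a : A, FB.counit (h a) = FA.counit a)

/-- A measuring of Frobenius algebras from `A` to `B`: a coalgebra `(P, δP, εP)` together
with a bilinear map `ψ : P ⊗ A → B` satisfying
`ψ(p ⊗ aa') = ψ(p⁽¹⁾ ⊗ a)ψ(p⁽²⁾ ⊗ a')`, `ψ(p ⊗ 1) = ε(p)1`,
`Δ_B(ψ(p ⊗ a)) = ψ(p⁽¹⁾ ⊗ a⁽¹⁾) ⊗ ψ(p⁽²⁾ ⊗ a⁽²⁾)` and `ν_B(ψ(p ⊗ a)) = ε(p)ν_A(a)`. -/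
def IsFrobMeasuring {k A B P : Type*} [CommRing k] [Ring A] [Algebra k A]
    [Ring B] [Algebra k B] [AddCommGroup P] [Module k P]
    (FA : FrobeniusAlgebra k A) (FB : FrobeniusAlgebra k B)
    (δP : P →ₗ[k] P ⊗[k] P) (εP : P →ₗ[k] k)
    (ψ : P →ₗ[k] A →ₗ[k] B) : Prop :=
  (∀ (p : P) (a a' : A),
      ψ p (a * a')
        = LinearMap.mul' k B
            (TensorProduct.map (ψ.flip a) (ψ.flip a') (δP p))) ∧
  (∀ p : P, ψ p 1 = εP p • (1 : B)) ∧
  (∀ (p : P) (a : A),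
      FB.comul (ψ p a)
        = TensorProduct.map (TensorProduct.lift ψ) (TensorProduct.lift ψ)
            (TensorProduct.tensorTensorTensorComm k P P A A
              (δP p ⊗ₜ[k] FA.comul a))) ∧
  (∀ (p : P) (a : A), FB.counit (ψ p a) = εP p * FA.counit a)

/-- The reversed measuring `ψ̄(p ⊗ b) := e¹ ν_B(ψ(p ⊗ e²) b)` built from the Casimir
element `e¹ ⊗ e² = Δ_A(1)`. -/
noncomputable def frobMeasuringBar {k A B P : Type*} [Field k] [Ring A] [Algebra k A]
    [Ring B] [Algebra k B] [AddCommGroup P] [Module k P]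
    (FA : FrobeniusAlgebra k A) (FB : FrobeniusAlgebra k B)
    (ψ : P →ₗ[k] A →ₗ[k] B) : P →ₗ[k] B →ₗ[k] A :=
  ((dualTensorHom k B A) ∘ₗ
      (TensorProduct.comm k A (Module.Dual k B)).toLinearMap) ∘ₗ
    (LinearMap.applyₗ (FA.comul 1) :
        (A ⊗[k] A →ₗ[k] A ⊗[k] Module.Dual k B) →ₗ[k] A ⊗[k] Module.Dual k B) ∘ₗ
    (TensorProduct.mapBilinear (RingHom.id k) A A A (Module.Dual k B)
        (LinearMap.id : A →ₗ[k] A)) ∘ₗ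
    (LinearMap.llcomp k A B (Module.Dual k B)
        ((LinearMap.llcomp k B B k FB.counit) ∘ₗ (LinearMap.mul k B))) ∘ₗ ψ

/-! The Casimir element `e¹ ⊗ e² = Δ_A(1)` reproduces `x = e¹ ν_A(e² x)`, so elements of `A`
and of `A ⊗ M` are determined by their pairings with the functionals `ν_A(a ·)`. Against these,
`ψ̄` is characterised by the adjunction `ν_A(a ψ̄(p, b)) = ν_B(ψ(p, a) b)`, which converts each
axiom for `ψ̄` into axioms for `ψ`: unit and counit swap roles, and multiplicativity of `ψ` gives
the module rule `a ψ̄(p, b) = ψ̄(p₁, ψ(p₂, a) b)`. Comultiplicativity of `ψ` at `1` gives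
`ψ(p₁, ψ̄(p₂, b)) = ε(p) b`, from which the module rule and coassociativity yield
`ψ̄(p, b b') = ψ̄(p₂, b) ψ̄(p₁, b')`; pairing the first factor of `Δ_A ψ̄(p, b)` with `ν_A(a ·)`
reduces comultiplicativity to the module rule again. -/

open LinearMap

theorem apply_rid_lTensor_eq_apply_lid_rTensor {k M N : Type*} [CommRing k] [AddCommGroup M]
    [Module k M] [AddCommGroup N] [Module k N] (f : M →ₗ[k] k) (g : N →ₗ[k] k) (v : M ⊗[k] N) :
    f (TensorProduct.rid k M (lTensor M g v)) = g (TensorProduct.lid k N (rTensor N f v)) := by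
  induction v using TensorProduct.induction_on with
  | zero => simp
  | tmul x y => simp [mul_comm]
  | add u w hu hw => simp [hu, hw]

namespace FrobeniusAlgebra

variable {k C : Type*} [CommRing k] [Ring C] [Algebra k C] (F : FrobeniusAlgebra k C)

theorem comul_mul_eq_rTensor (a x : C) :
    F.comul (a * x) = rTensor C (mulLeft k a) (F.comul x) :=
  F.frob_left a x

theorem comul_mul_eq_lTensor (x a : C) :
    F.comul (x * a) = lTensor C (mulRight k a) (F.comul x) :=
  F.frob_right x a

theorem lid_rTensor_counit_comp_mulLeft_comul (a x : C) :
    TensorProduct.lid k C (rTensor C (F.counit ∘ₗ mulLeft k a) (F.comul x)) = a * x := by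
  rw [rTensor_comp, comp_apply, ← F.comul_mul_eq_rTensor]
  exact F.counit_left (a * x)

theorem rid_lTensor_counit_comp_mulRight_comul (x a : C) :
    TensorProduct.rid k C (lTensor C (F.counit ∘ₗ mulRight k a) (F.comul x)) = x * a := by
  rw [lTensor_comp, comp_apply, ← F.comul_mul_eq_lTensor]
  exact F.counit_right (x * a)

theorem eq_of_forall_counit_mul_eq {x y : C} (h : ∀ a, F.counit (a * x) = F.counit (a * y)) :
    x = y := by
  have : F.counit ∘ₗ mulRight k x = F.counit ∘ₗ mulRight k y := by ext a; exact h a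
  rw [← one_mul x, ← one_mul y, ← F.rid_lTensor_counit_comp_mulRight_comul,
    ← F.rid_lTensor_counit_comp_mulRight_comul, this]

theorem tensor_ext {M : Type*} [AddCommGroup M] [Module k M] {X Y : C ⊗[k] M}
    (h : ∀ a, TensorProduct.lid k M (rTensor M (F.counit ∘ₗ mulLeft k a) X)
      = TensorProduct.lid k M (rTensor M (F.counit ∘ₗ mulLeft k a) Y)) : X = Y := by
  let L : C ⊗[k] (C ⊗[k] M) →ₗ[k] M := (TensorProduct.lid k M).toLinearMap ∘ₗ
    rTensor M F.counit ∘ₗ rTensor M (mul' k C) ∘ₗ (TensorProduct.assoc k C C M).symm.toLinearMap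
  have hL : ∀ a Z, L (a ⊗ₜ Z) = TensorProduct.lid k M (rTensor M (F.counit ∘ₗ mulLeft k a) Z) := by
    intro a Z
    induction Z using TensorProduct.induction_on with
    | zero => simp
    | tmul c m => simp [L]
    | add Z Z' hZ hZ' => simp only [TensorProduct.tmul_add, map_add, hZ, hZ']
  have hrepr : ∀ Z, Z = lTensor C (L ∘ₗ (TensorProduct.mk k C _).flip Z) (F.comul 1) := by
    intro Z
    induction Z using TensorProduct.induction_on with
    | zero => simp
    | tmul c m =>
      have key : ∀ v : C ⊗[k] C, lTensor C (L ∘ₗ (TensorProduct.mk k C _).flip (c ⊗ₜ m)) v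
          = TensorProduct.rid k C (lTensor C (F.counit ∘ₗ mulRight k c) v) ⊗ₜ m := by
        intro v
        induction v using TensorProduct.induction_on with
        | zero => simp
        | tmul x y => simp [hL, TensorProduct.smul_tmul]
        | add v v' hv hv' => simp only [map_add, hv, hv', TensorProduct.add_tmul]
      rw [key, rid_lTensor_counit_comp_mulRight_comul, one_mul]
    | add Z Z' hZ hZ' => rw [map_add, comp_add, lTensor_add, LinearMap.add_apply, ← hZ, ← hZ']
  have hXY : L ∘ₗ (TensorProduct.mk k C _).flip X = L ∘ₗ (TensorProduct.mk k C _).flip Y := by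
    ext a; simpa [hL] using h a
  rw [hrepr X, hrepr Y, hXY]

end FrobeniusAlgebra

section Measuring

variable {k A B P : Type*} [Field k] [Ring A] [Algebra k A] [Ring B] [Algebra k B]
  [AddCommGroup P] [Module k P] (FA : FrobeniusAlgebra k A) (FB : FrobeniusAlgebra k B)
  (ψ : P →ₗ[k] A →ₗ[k] B)

theorem frobMeasuringBar_apply (p : P) (b : B) :
    frobMeasuringBar FA FB ψ p b
      = TensorProduct.rid k A (lTensor A (FB.counit ∘ₗ mulRight k b ∘ₗ ψ p) (FA.comul 1)) := by
  simp only [frobMeasuringBar, LinearMap.comp_apply, LinearMap.applyₗ_apply_apply]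
  generalize FA.comul 1 = v
  induction v using TensorProduct.induction_on with
  | zero => simp
  | tmul x y => simp [TensorProduct.mapBilinear_apply]
  | add v v' hv hv' => simp only [map_add, LinearMap.add_apply, hv, hv']

theorem counit_mul_frobMeasuringBar (p : P) (a : A) (b : B) :
    FA.counit (a * frobMeasuringBar FA FB ψ p b) = FB.counit (ψ p a * b) := by
  rw [frobMeasuringBar_apply, ← mulLeft_apply k a, ← comp_apply FA.counit,
    apply_rid_lTensor_eq_apply_lid_rTensor, FA.lid_rTensor_counit_comp_mulLeft_comul, mul_one]
  rfl

variable {FA FB ψ} (δP : P →ₗ[k] P ⊗[k] P) (εP : P →ₗ[k] k)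

theorem frobMeasuringBar_one (hcounit : ∀ p a, FB.counit (ψ p a) = εP p * FA.counit a) (p : P) :
    frobMeasuringBar FA FB ψ p 1 = εP p • (1 : A) :=
  FA.eq_of_forall_counit_mul_eq fun a => by
    rw [counit_mul_frobMeasuringBar, mul_one, hcounit, mul_smul_comm, mul_one, map_smul,
      smul_eq_mul]

theorem counit_frobMeasuringBar (hone : ∀ p, ψ p 1 = εP p • (1 : B)) (p : P) (b : B) :
    FA.counit (frobMeasuringBar FA FB ψ p b) = εP p * FB.counit b := by
  rw [← one_mul (frobMeasuringBar FA FB ψ p b), counit_mul_frobMeasuringBar, hone, smul_mul_assoc,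
    one_mul, map_smul, smul_eq_mul]

theorem mul_frobMeasuringBar
    (hmul : ∀ p a a', ψ p (a * a') = mul' k B (map (ψ.flip a) (ψ.flip a') (δP p)))
    (p : P) (a : A) (b : B) :
    a * frobMeasuringBar FA FB ψ p b
      = lift ((frobMeasuringBar FA FB ψ).compl₂ (mulRight k b ∘ₗ ψ.flip a)) (δP p) := by
  refine FA.eq_of_forall_counit_mul_eq fun a' => ?_
  have key : FA.counit ∘ₗ mulLeft k a' ∘ₗ
        lift ((frobMeasuringBar FA FB ψ).compl₂ (mulRight k b ∘ₗ ψ.flip a))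
      = FB.counit ∘ₗ mulRight k b ∘ₗ mul' k B ∘ₗ map (ψ.flip a') (ψ.flip a) := by
    ext s t
    simp [counit_mul_frobMeasuringBar, mul_assoc]
  rw [← mul_assoc, counit_mul_frobMeasuringBar, hmul]
  exact (LinearMap.congr_fun key (δP p)).symm

theorem lift_lTensor_flip_frobMeasuringBar
    (hcomul : ∀ p a, FB.comul (ψ p a) = map (lift ψ)
      (lift ψ) (tensorTensorTensorComm k P P A A (δP p ⊗ₜ FA.comul a)))
    (hone : ∀ p, ψ p 1 = εP p • (1 : B)) (p : P) (b : B) :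
    lift ψ (lTensor P ((frobMeasuringBar FA FB ψ).flip b) (δP p)) = εP p • b := by
  have key : ∀ u : P ⊗[k] P, lift ψ (lTensor P ((frobMeasuringBar FA FB ψ).flip b) u)
      = TensorProduct.rid k B (lTensor B (FB.counit ∘ₗ mulRight k b)
          (map (lift ψ) (lift ψ)
            (tensorTensorTensorComm k P P A A (u ⊗ₜ FA.comul 1)))) := by
    intro u
    induction u using TensorProduct.induction_on with
    | zero => simp
    | tmul s t =>
      simp only [lTensor_tmul, flip_apply, TensorProduct.lift.tmul, frobMeasuringBar_apply]
      generalize FA.comul 1 = v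
      induction v using TensorProduct.induction_on with
      | zero => simp
      | tmul x y => simp
      | add v v' hv hv' => simp only [map_add, TensorProduct.tmul_add, hv, hv']
    | add u u' hu hu' => simp only [map_add, TensorProduct.add_tmul, hu, hu']
  rw [key, ← hcomul, FB.rid_lTensor_counit_comp_mulRight_comul, hone, smul_mul_assoc, one_mul]

theorem frobMeasuringBar_mul
    (hmul : ∀ p a a', ψ p (a * a') = mul' k B (map (ψ.flip a) (ψ.flip a') (δP p)))
    (hcomul : ∀ p a, FB.comul (ψ p a) = map (lift ψ)
      (lift ψ) (tensorTensorTensorComm k P P A A (δP p ⊗ₜ FA.comul a)))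
    (hone : ∀ p, ψ p 1 = εP p • (1 : B))
    (hcoassoc : ∀ p, TensorProduct.assoc k P P P (rTensor P δP (δP p)) = lTensor P δP (δP p))
    (hcounit : ∀ p, TensorProduct.rid k P (lTensor P εP (δP p)) = p) (p : P) (b b' : B) :
    frobMeasuringBar FA FB ψ p (b * b') = mul' k A (map
      ((frobMeasuringBar FA FB ψ).flip b) ((frobMeasuringBar FA FB ψ).flip b')
      (TensorProduct.comm k P P (δP p))) := by
  set ψ' := frobMeasuringBar FA FB ψ
  -- `T ((x ⊗ y) ⊗ z) = ψ̄(x, ψ(y, ψ̄(z, b)) b')`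
  let T : (P ⊗[k] P) ⊗[k] P →ₗ[k] A := lift ψ' ∘ₗ
    lTensor P (mulRight k b' ∘ₗ lift ψ ∘ₗ lTensor P (ψ'.flip b)) ∘ₗ
    (TensorProduct.assoc k P P P).toLinearMap
  have hT : ∀ (u : P ⊗[k] P) (t : P), T (u ⊗ₜ t)
      = lift (ψ'.compl₂ (mulRight k b' ∘ₗ ψ.flip (ψ' t b))) u := by
    intro u t
    induction u using TensorProduct.induction_on with
    | zero => simp
    | tmul x y => simp [T]
    | add u u' hu hu' => simp only [TensorProduct.add_tmul, map_add, hu, hu']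
  have hsplit : mul' k A ∘ₗ map (ψ'.flip b) (ψ'.flip b') ∘ₗ
      (TensorProduct.comm k P P).toLinearMap = T ∘ₗ rTensor P δP := by
    ext s t
    simp [hT, ψ', mul_frobMeasuringBar δP hmul]
  have hK : lift ψ ∘ₗ lTensor P (ψ'.flip b) ∘ₗ δP = εP.smulRight b := by
    ext q
    exact lift_lTensor_flip_frobMeasuringBar δP εP hcomul hone q b
  have hcollapse : T ∘ₗ (TensorProduct.assoc k P P P).symm.toLinearMap ∘ₗ lTensor P δP
      = ψ'.flip (b * b') ∘ₗ (TensorProduct.rid k P).toLinearMap ∘ₗ lTensor P εP := calc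
    _ = lift ψ' ∘ₗ lTensor P (mulRight k b' ∘ₗ
          (lift ψ ∘ₗ lTensor P (ψ'.flip b) ∘ₗ δP)) := by
      simp only [T, comp_assoc, LinearEquiv.comp_symm_assoc, lTensor_comp]
    _ = _ := by
      rw [hK]
      ext x q
      simp
  calc ψ' p (b * b') = ψ'.flip (b * b') (TensorProduct.rid k P (lTensor P εP (δP p))) := by
        rw [hcounit]; rfl
    _ = T (rTensor P δP (δP p)) := by
        rw [← LinearEquiv.symm_apply_apply (TensorProduct.assoc k P P P) (rTensor P δP (δP p)),
          hcoassoc]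
        exact (LinearMap.congr_fun hcollapse (δP p)).symm
    _ = _ := (LinearMap.congr_fun hsplit (δP p)).symm

theorem comul_frobMeasuringBar
    (hmul : ∀ p a a', ψ p (a * a') = mul' k B (map (ψ.flip a) (ψ.flip a') (δP p)))
    (p : P) (b : B) :
    FA.comul (frobMeasuringBar FA FB ψ p b)
      = map (lift (frobMeasuringBar FA FB ψ))
          (lift (frobMeasuringBar FA FB ψ))
          (tensorTensorTensorComm k P P B B
            (TensorProduct.comm k P P (δP p) ⊗ₜ FB.comul b)) := by
  set ψ' := frobMeasuringBar FA FB ψ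
  refine FA.tensor_ext fun a => ?_
  have key : ∀ u : P ⊗[k] P, TensorProduct.lid k A (rTensor A (FA.counit ∘ₗ mulLeft k a)
      (map (lift ψ') (lift ψ')
        (tensorTensorTensorComm k P P B B (TensorProduct.comm k P P u ⊗ₜ FB.comul b))))
      = lift (ψ'.compl₂ (mulRight k b ∘ₗ ψ.flip a)) u := by
    intro u
    induction u using TensorProduct.induction_on with
    | zero => simp
    | tmul s t =>
      rw [TensorProduct.lift.tmul, compl₂_apply, comp_apply, flip_apply, mulRight_apply,
        ← FB.lid_rTensor_counit_comp_mulLeft_comul, TensorProduct.comm_tmul]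
      generalize FB.comul b = w
      induction w using TensorProduct.induction_on with
      | zero => simp
      | tmul c d => simp [ψ', counit_mul_frobMeasuringBar]
      | add w w' hw hw' => simp only [TensorProduct.tmul_add, map_add, hw, hw']
    | add u u' hu hu' => simp only [map_add, TensorProduct.add_tmul, hu, hu']
  rw [key, FA.lid_rTensor_counit_comp_mulLeft_comul, mul_frobMeasuringBar δP hmul]

end Measuring

theorem frobMeasuringBar_isMeasuring_general {k A B P : Type*} [Field k] [Ring A] [Algebra k A]
    [Ring B] [Algebra k B] [AddCommGroup P] [Module k P]
    (FA : FrobeniusAlgebra k A) (FB : FrobeniusAlgebra k B)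
    (δP : P →ₗ[k] P ⊗[k] P) (εP : P →ₗ[k] k)
    (hcoassoc : ∀ p : P,
      TensorProduct.assoc k P P P
          (TensorProduct.map δP (LinearMap.id : P →ₗ[k] P) (δP p))
        = TensorProduct.map (LinearMap.id : P →ₗ[k] P) δP (δP p))
    (hcounitr : ∀ p : P,
      TensorProduct.rid k P
          (TensorProduct.map (LinearMap.id : P →ₗ[k] P) εP (δP p)) = p)
    (ψ : P →ₗ[k] A →ₗ[k] B) (hψ : IsFrobMeasuring FA FB δP εP ψ) :
    IsFrobMeasuring FB FA
      ((TensorProduct.comm k P P).toLinearMap ∘ₗ δP) εP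
      (frobMeasuringBar FA FB ψ) := by
  obtain ⟨hmul, hone, hcomul, hcounit⟩ := hψ
  exact ⟨frobMeasuringBar_mul δP εP hmul hcomul hone hcoassoc hcounitr,
    frobMeasuringBar_one εP hcounit, comul_frobMeasuringBar δP hmul,
    counit_frobMeasuringBar εP hone⟩

/-- If `(P, ψ)` is a measuring of Frobenius algebras from `A` to `B`, then
`ψ̄(p ⊗ b) = e¹ ν_B(ψ(p ⊗ e²) b)` is a measuring of Frobenius algebras from `B` to `A`
with respect to the co-opposite coalgebra structure on `P`. -/
theorem frobMeasuringBar_isMeasuring {k A B P : Type*} [Field k] [Ring A] [Algebra k A]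
    [Ring B] [Algebra k B] [AddCommGroup P] [Module k P]
    (FA : FrobeniusAlgebra k A) (FB : FrobeniusAlgebra k B)
    (δP : P →ₗ[k] P ⊗[k] P) (εP : P →ₗ[k] k)
    (hcoassoc : ∀ p : P,
      TensorProduct.assoc k P P P
          (TensorProduct.map δP (LinearMap.id : P →ₗ[k] P) (δP p))
        = TensorProduct.map (LinearMap.id : P →ₗ[k] P) δP (δP p))
    (hcounitl : ∀ p : P,
      TensorProduct.lid k P
          (TensorProduct.map εP (LinearMap.id : P →ₗ[k] P) (δP p)) = p)
    (hcounitr : ∀ p : P,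
      TensorProduct.rid k P
          (TensorProduct.map (LinearMap.id : P →ₗ[k] P) εP (δP p)) = p)
    (ψ : P →ₗ[k] A →ₗ[k] B) (hψ : IsFrobMeasuring FA FB δP εP ψ) :
    IsFrobMeasuring FB FA
      ((TensorProduct.comm k P P).toLinearMap ∘ₗ δP) εP
      (frobMeasuringBar FA FB ψ) :=
  frobMeasuringBar_isMeasuring_general FA FB δP εP hcoassoc hcounitr ψ hψ
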